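/- arXiv:1303.6548 — 6 statements merged into one kernel-verified Lean document; each statement's English description precedes it below -/
import Mathlib

section
/- Let ψ, u, g be real numbers with ψ > 1 and u² + g < 0, and let A(ψ,u,g) be the 2×2 real matrix with entries A₁₁ = −u/ψ², A₁₂ = (1−ψ)/ψ, A₂₁ = (u²+g)/ψ³, A₂₂ = −u/ψ². Then with D = √((u²+g)(1−ψ)), the numbers λ₁ = (−u − D)/ψ² and λ₂ = (−u + D)/ψ² satisfy λ₁ < λ₂; in particular the matrix A has two distinct real eigenvalues, so the system is strictly hyperbolic. -/
/-- Under ψ > 1 and u² + g < 0, the two characteristic speeds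
λ₁ = (−u−D)/ψ² and λ₂ = (−u+D)/ψ², with D = √((u²+g)(1−ψ)), are distinct
(λ₁ < λ₂): the system is strictly hyperbolic. -/
theorem gel_strict_hyperbolicity (ψ u g : ℝ) (hψ : 1 < ψ) (hhyp : u ^ 2 + g < 0) :
    let D : ℝ := Real.sqrt ((u ^ 2 + g) * (1 - ψ))
    let lam1 : ℝ := (-u - D) / ψ ^ 2
    let lam2 : ℝ := (-u + D) / ψ ^ 2
    lam1 < lam2 := by
  intro D lam1 lam2
  have hD : 0 < D := Real.sqrt_pos.mpr (mul_pos_of_neg_of_neg hhyp (sub_neg.mpr hψ))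
  exact div_lt_div_of_pos_right (by linarith) (by positivity)
end

section
/- Let ψ, u, g be real numbers with ψ > 1 and u² + g < 0, and let A(ψ,u,g) be the 2×2 real matrix with entries A₁₁ = −u/ψ², A₁₂ = (1−ψ)/ψ, A₂₁ = (u²+g)/ψ³, A₂₂ = −u/ψ². Set D = √((u²+g)(1−ψ)) and s = √((u²+g)/(1−ψ)). Then the row vector (−s/ψ, 1) is a left eigenvector of A with eigenvalue (−u + D)/ψ², i.e. (−s/ψ, 1)·A = ((−u+D)/ψ²)·(−s/ψ, 1), and the row vector (s/ψ, 1) is a left eigenvector of A with eigenvalue (−u − D)/ψ². -/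
/-! A row vector `(x, 1)` is a left eigenvector of `!![a, b; c, a]` exactly when `b x² = c`,
with eigenvalue `a + b x`. For the gel matrix this asks for `x² = s²/ψ²`, so `x = ∓ s/ψ`, and
the two eigenvalues `-u/ψ² ± (ψ - 1) s/ψ²` are the stated ones because `D = |1 - ψ| s`. -/

open Matrix

theorem Matrix.vecMul_cons_one_eq_smul_of_mul_sq_eq {R : Type*} [CommRing R] {a b c x : R}
    (h : b * x ^ 2 = c) : vecMul ![x, 1] !![a, b; c, a] = (a + b * x) • ![x, 1] := by
  ext i
  fin_cases i <;> simp [vecMul, dotProduct, ← h] <;> ring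

theorem Real.sqrt_mul_eq_abs_mul_sqrt_div (p q : ℝ) : √(p * q) = |q| * √(p / q) := by
  rcases eq_or_ne q 0 with rfl | hq
  · simp
  rw [show p * q = q ^ 2 * (p / q) by field_simp, Real.sqrt_mul (sq_nonneg q), Real.sqrt_sq_eq_abs]

/-- Left eigenvectors of the gradient matrix A(ψ,u,g): the row vector
(−s/ψ, 1) is a left eigenvector with eigenvalue (−u+D)/ψ² and (s/ψ, 1) is
a left eigenvector with eigenvalue (−u−D)/ψ², where D = √((u²+g)(1−ψ)) and
s = √((u²+g)/(1−ψ)). -/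
theorem gel_left_eigenvectors (ψ u g : ℝ) (hψ : 1 < ψ) (hhyp : u ^ 2 + g < 0) :
    let A : Matrix (Fin 2) (Fin 2) ℝ :=
      !![-u / ψ ^ 2, (1 - ψ) / ψ; (u ^ 2 + g) / ψ ^ 3, -u / ψ ^ 2]
    let D : ℝ := Real.sqrt ((u ^ 2 + g) * (1 - ψ))
    let s : ℝ := Real.sqrt ((u ^ 2 + g) / (1 - ψ))
    Matrix.vecMul ![-s / ψ, 1] A = ((-u + D) / ψ ^ 2) • ![-s / ψ, 1] ∧
      Matrix.vecMul ![s / ψ, 1] A = ((-u - D) / ψ ^ 2) • ![s / ψ, 1] := by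
  intro A D s
  have hψ0 : ψ ≠ 0 := by positivity
  have h1ψ : 1 - ψ ≠ 0 := by linarith
  have hs_sq : s ^ 2 = (u ^ 2 + g) / (1 - ψ) :=
    Real.sq_sqrt (div_nonneg_of_nonpos hhyp.le (by linarith))
  have hD : D = (ψ - 1) * s := by
    rw [show D = _ from Real.sqrt_mul_eq_abs_mul_sqrt_div _ _, abs_of_neg (by linarith), neg_sub]
  have hsq (x : ℝ) (hx : x ^ 2 = s ^ 2) : (1 - ψ) / ψ * (x / ψ) ^ 2 = (u ^ 2 + g) / ψ ^ 3 := by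
    rw [div_pow, hx, hs_sq]
    field_simp
  constructor
  · convert vecMul_cons_one_eq_smul_of_mul_sq_eq (a := -u / ψ ^ 2) (hsq (-s) (neg_sq s)) using 2
    rw [hD]; field_simp; ring
  · convert vecMul_cons_one_eq_smul_of_mul_sq_eq (a := -u / ψ ^ 2) (hsq s rfl) using 2
    rw [hD]; field_simp; ring
end

section
/- Let n, q, v₁ be vectors in Euclidean ℝ³ with ‖n‖ = 1 and ⟨q, n⟩ = 0, let w, γ₂, φ₂ be real numbers with φ₂ ≠ 0, and define v₂ = v₁ + (w/φ₂)·n + q and v_f = v₁ + w·n + q. Let T₁, T₂, T be 3×3 real matrices satisfying the interface momentum balance (T₁ + T₂ − T)·n = γ₂·|w|·w·(1 − 1/φ₂)·n. Then ⟨T₁·n, v₁⟩ + ⟨T₂·n, v₂⟩ − ⟨T·n, v_f⟩ = γ₂·|w|·w·(1 − 1/φ₂)·⟨v₁, n⟩ + ( ⟨(1/φ₂)·T₂·n, n⟩ − ⟨T·n, n⟩ )·w − ⟨T₁·n, q⟩. -/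
open scoped RealInnerProductSpace Matrix

theorem inner_add_inner_sub_inner_eq_of_add_sub_eq_smul
    {E : Type*} [NormedAddCommGroup E] [InnerProductSpace ℝ E]
    {a b c n q : E} {k : ℝ} (hbal : a + b - c = k • n) (hq : ⟪q, n⟫ = 0) (v : E) (s t : ℝ) :
    ⟪a, v⟫ + ⟪b, v + s • n + q⟫ - ⟪c, v + t • n + q⟫
      = k * ⟪v, n⟫ + s * ⟪b, n⟫ - t * ⟪c, n⟫ - ⟪a, q⟫ := by
  have hv : ⟪a + b - c, v⟫ = k * ⟪v, n⟫ := by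
    rw [hbal, real_inner_smul_left, real_inner_comm]
  have hq' : ⟪b - c, q⟫ = -⟪a, q⟫ := by
    rw [show b - c = k • n - a by rw [← hbal]; abel, inner_sub_left, real_inner_smul_left,
      real_inner_comm, hq, mul_zero, zero_sub]
  rw [inner_sub_left, inner_add_left] at hv
  rw [inner_sub_left] at hq'
  simp only [inner_add_right, real_inner_smul_right]
  linarith

theorem gel_stress_power_boundary_identity_general
    (n q v₁ : EuclideanSpace ℝ (Fin 3)) (hq : ⟪q, n⟫ = 0)
    (w γ₂ φ₂ : ℝ)
    (T₁ T₂ T : Matrix (Fin 3) (Fin 3) ℝ)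
    (hbal : Matrix.toEuclideanLin (T₁ + T₂ - T) n = (γ₂ * |w| * w * (1 - 1 / φ₂)) • n) :
    let v₂ := v₁ + (w / φ₂) • n + q
    let vf := v₁ + w • n + q
    ⟪Matrix.toEuclideanLin T₁ n, v₁⟫ + ⟪Matrix.toEuclideanLin T₂ n, v₂⟫
        - ⟪Matrix.toEuclideanLin T n, vf⟫
      = γ₂ * |w| * w * (1 - 1 / φ₂) * ⟪v₁, n⟫
        + (⟪Matrix.toEuclideanLin ((1 / φ₂) • T₂) n, n⟫
            - ⟪Matrix.toEuclideanLin T n, n⟫) * w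
        - ⟪Matrix.toEuclideanLin T₁ n, q⟫ := by
  intro v₂ vf
  rw [map_sub, map_add, LinearMap.sub_apply, LinearMap.add_apply] at hbal
  rw [inner_add_inner_sub_inner_eq_of_add_sub_eq_smul hbal hq, map_smul, LinearMap.smul_apply,
    real_inner_smul_left]
  ring

/-- Stress-power boundary identity (2.34) at the gel–solvent interface. -/
theorem gel_stress_power_boundary_identity
    (n q v₁ : EuclideanSpace ℝ (Fin 3)) (hn : ‖n‖ = 1) (hq : ⟪q, n⟫ = 0)
    (w γ₂ φ₂ : ℝ) (hφ : φ₂ ≠ 0)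
    (T₁ T₂ T : Matrix (Fin 3) (Fin 3) ℝ)
    (hbal : Matrix.toEuclideanLin (T₁ + T₂ - T) n = (γ₂ * |w| * w * (1 - 1 / φ₂)) • n) :
    let v₂ := v₁ + (w / φ₂) • n + q
    let vf := v₁ + w • n + q
    ⟪Matrix.toEuclideanLin T₁ n, v₁⟫ + ⟪Matrix.toEuclideanLin T₂ n, v₂⟫
        - ⟪Matrix.toEuclideanLin T n, vf⟫
      = γ₂ * |w| * w * (1 - 1 / φ₂) * ⟪v₁, n⟫
        + (⟪Matrix.toEuclideanLin ((1 / φ₂) • T₂) n, n⟫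
            - ⟪Matrix.toEuclideanLin T n, n⟫) * w
        - ⟪Matrix.toEuclideanLin T₁ n, q⟫ :=
  gel_stress_power_boundary_identity_general n q v₁ hq w γ₂ φ₂ T₁ T₂ T hbal
end

section
/- Let n, q, v₁ be vectors in Euclidean ℝ³ with ‖n‖ = 1 and ⟨q, n⟩ = 0, let γ₂, φ₂, η_⊥, η_∥ be real numbers with φ₂ ≠ 0, and let w ≤ 0 (swelling state). Define v₂ = v₁ + (w/φ₂)·n + q and v_f = v₁ + w·n + q. Let T₁, T₂, T be 3×3 real matrices satisfying: (i) the momentum balance (T₁ + T₂ − T)·n = γ₂·|w|·w·(1 − 1/φ₂)·n; (ii) the permeability condition η_⊥·w = (⟨T·n, n⟩ − (1/2)γ₂w²) − (⟨(1/φ₂)·T₂·n, n⟩ − (1/2)γ₂(w/φ₂)²); and (iii) the slip condition that the tangential part of T₁·n equals η_∥·q, i.e. T₁·n − ⟨T₁·n, n⟩·n = η_∥·q. Then ⟨T₁·n, v₁⟩ + ⟨T₂·n, v₂⟩ − ⟨T·n, v_f⟩ + (1/2)γ₂φ₂‖v₂‖²⟨v₁ − v₂, n⟩ − (1/2)γ₂‖v_f‖²⟨v₁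 − v_f, n⟩ = −η_⊥·w² − η_∥·‖q‖². -/
/-!
Write `A = T₁n`, `B = T₂n`, `C = Tn` for the tractions and `v₂ = v₁ + q + (w/φ₂)n`,
`v_f = v₁ + q + wn`. Pairing the momentum balance with `v₁ + q` removes the tangential
and polymer-velocity parts of all three tractions except `⟪A, q⟫`, which the slip condition
turns into `η_∥‖q‖²`. What is left are the normal tractions, weighted by `w/φ₂` and `w`, and
the kinetic-energy fluxes; the permeability condition trades the normal tractions for
`η_⊥w` plus kinetic terms, and all kinetic terms cancel.
-/

open scoped RealInnerProductSpace Matrix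

section InnerProductSpace

variable {E : Type*} [NormedAddCommGroup E] [InnerProductSpace ℝ E]

theorem norm_add_smul_sq_of_norm_eq_one {n : E} (hn : ‖n‖ = 1) (u : E) (a : ℝ) :
    ‖u + a • n‖ ^ 2 = ‖u‖ ^ 2 + 2 * a * ⟪u, n⟫ + a ^ 2 := by
  rw [norm_add_sq_real, norm_smul, real_inner_smul_right, mul_pow, hn, Real.norm_eq_abs, sq_abs]
  ring

theorem inner_eq_mul_norm_sq_of_sub_inner_smul_eq {x n q : E} {c : ℝ} (hq : ⟪q, n⟫ = 0)
    (h : x - ⟪x, n⟫ • n = c • q) : ⟪x, q⟫ = c * ‖q‖ ^ 2 := by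
  have := congrArg (⟪·, q⟫) h
  simpa only [inner_sub_left, real_inner_smul_left, real_inner_comm q n, hq, mul_zero, sub_zero,
    real_inner_self_eq_norm_sq] using this

theorem interface_energy_production_eq (n q v₁ A B C : E) (hn : ‖n‖ = 1) (hq : ⟪q, n⟫ = 0)
    (γ₂ φ₂ ηperp ηpar w : ℝ) (hφ : φ₂ ≠ 0)
    (hbal : A + B - C = (-(γ₂ * w ^ 2 * (1 - 1 / φ₂))) • n)
    (hperm : ηperp * w =
      (⟪C, n⟫ - (1 / 2) * γ₂ * w ^ 2) - ((1 / φ₂) * ⟪B, n⟫ - (1 / 2) * γ₂ * (w / φ₂) ^ 2))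
    (hslip : A - ⟪A, n⟫ • n = ηpar • q) :
    let v₂ := v₁ + (w / φ₂) • n + q
    let vf := v₁ + w • n + q
    ⟪A, v₁⟫ + ⟪B, v₂⟫ - ⟪C, vf⟫
        + (1 / 2) * γ₂ * φ₂ * ‖v₂‖ ^ 2 * ⟪v₁ - v₂, n⟫
        - (1 / 2) * γ₂ * ‖vf‖ ^ 2 * ⟪v₁ - vf, n⟫
      = -ηperp * w ^ 2 - ηpar * ‖q‖ ^ 2 := by
  intro v₂ vf
  have hnn : ⟪n, n⟫ = 1 := by rw [real_inner_self_eq_norm_sq, hn, one_pow]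
  have hshift (a : ℝ) : v₁ + a • n + q = (v₁ + q) + a • n := add_right_comm _ _ _
  have hflux (a : ℝ) : ⟪v₁ - (v₁ + a • n + q), n⟫ = -a := by
    rw [sub_add_eq_sub_sub, sub_add_cancel_left, inner_sub_left, inner_neg_left,
      real_inner_smul_left, hnn, hq]
    ring
  have hbal_pair : ⟪A, v₁ + q⟫ + ⟪B, v₁ + q⟫ - ⟪C, v₁ + q⟫
      = -(γ₂ * w ^ 2 * (1 - 1 / φ₂)) * ⟪v₁, n⟫ := by
    rw [← inner_add_left, ← inner_sub_left, hbal, real_inner_smul_left, real_inner_comm,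
      inner_add_left, hq, add_zero]
  have hAq := inner_eq_mul_norm_sq_of_sub_inner_smul_eq hq hslip
  simp only [v₂, vf, hflux]
  simp only [hshift, inner_add_right, real_inner_smul_right,
    norm_add_smul_sq_of_norm_eq_one hn, inner_add_left v₁ q n, hq, add_zero] at hbal_pair ⊢
  linear_combination (norm := (field_simp; ring)) hbal_pair - hAq + w * hperm

end InnerProductSpace

/-- Pointwise form of the interfacial energy production in the dissipation law
(2.36)–(2.39): under the momentum balance, permeability and slip conditions the
boundary contribution equals −η⊥·w² − η∥·‖q‖². -/
theorem gel_interface_energy_dissipation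
    (n q v₁ : EuclideanSpace ℝ (Fin 3)) (hn : ‖n‖ = 1) (hq : ⟪q, n⟫ = 0)
    (γ₂ φ₂ ηperp ηpar : ℝ) (hφ : φ₂ ≠ 0) (w : ℝ) (hw : w ≤ 0)
    (T₁ T₂ T : Matrix (Fin 3) (Fin 3) ℝ)
    (hbal : Matrix.toEuclideanLin (T₁ + T₂ - T) n = (γ₂ * |w| * w * (1 - 1 / φ₂)) • n)
    (hperm : ηperp * w =
      (⟪Matrix.toEuclideanLin T n, n⟫ - (1 / 2) * γ₂ * w ^ 2)
        - (⟪Matrix.toEuclideanLin ((1 / φ₂) • T₂) n, n⟫ - (1 / 2) * γ₂ * (w / φ₂) ^ 2))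
    (hslip : Matrix.toEuclideanLin T₁ n - ⟪Matrix.toEuclideanLin T₁ n, n⟫ • n = ηpar • q) :
    let v₂ := v₁ + (w / φ₂) • n + q
    let vf := v₁ + w • n + q
    ⟪Matrix.toEuclideanLin T₁ n, v₁⟫ + ⟪Matrix.toEuclideanLin T₂ n, v₂⟫
        - ⟪Matrix.toEuclideanLin T n, vf⟫
        + (1 / 2) * γ₂ * φ₂ * ‖v₂‖ ^ 2 * ⟪v₁ - v₂, n⟫
        - (1 / 2) * γ₂ * ‖vf‖ ^ 2 * ⟪v₁ - vf, n⟫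
      = -ηperp * w ^ 2 - ηpar * ‖q‖ ^ 2 := by
  have hbal' : Matrix.toEuclideanLin T₁ n + Matrix.toEuclideanLin T₂ n
      - Matrix.toEuclideanLin T n = (-(γ₂ * w ^ 2 * (1 - 1 / φ₂))) • n := by
    rw [← LinearMap.add_apply, ← LinearMap.sub_apply, ← map_add, ← map_sub, hbal,
      abs_of_nonpos hw]
    congr 1
    ring
  rw [map_smul, LinearMap.smul_apply, real_inner_smul_left] at hperm
  exact interface_energy_production_eq n q v₁ _ _ _ hn hq γ₂ φ₂ ηperp ηpar w hφ hbal' hperm hslip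
end

section
/- Let T ≤ T' be real numbers, let a ≥ 0 and K ≥ 0 be constants with K·a·(T' − T) < 1, and let y : [T, T'] → ℝ be a continuous nonnegative function satisfying y(t) ≤ a + K·∫_T^t y(τ)² dτ for all t ∈ [T, T']. Then for all t ∈ [T, T']: y(t) ≤ a / (1 − K·a·(t − T)). -/
/-!
Put `u t = a + K ∫_T^t y²`. Then `0 ≤ y ≤ u`, so `u' = K y² ≤ K u²`, and for such a
Riccati subsolution the quantity `u t / (1 + K u(t) (t - T))` is nonincreasing: its derivative
has numerator `u' - K u²`. Comparing with its value `a` at `t = T` and solving for `u t` gives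
`y t ≤ u t ≤ a / (1 - K a (t - T))`.
-/

open Set

theorem hasDerivAt_integral_of_continuousOn {f : ℝ → ℝ} {T T' t : ℝ}
    (hf : ContinuousOn f (Icc T T')) (ht : t ∈ Ioo T T') :
    HasDerivAt (fun s => ∫ τ in T..s, f τ) (f t) t :=
  intervalIntegral.integral_hasDerivAt_right
    ((hf.mono (Icc_subset_Icc le_rfl ht.2.le)).intervalIntegrable_of_Icc ht.1.le)
    ((hf.mono Ioo_subset_Icc_self).stronglyMeasurableAtFilter isOpen_Ioo t ht)
    (hf.continuousAt (Icc_mem_nhds ht.1 ht.2))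

section Riccati

variable {u u' : ℝ → ℝ} {K T T' : ℝ}

theorem antitoneOn_div_one_add_of_deriv_le_mul_sq (hK : 0 ≤ K)
    (hu : ContinuousOn u (Icc T T')) (hu' : ∀ t ∈ Ioo T T', HasDerivAt u (u' t) t)
    (hbound : ∀ t ∈ Ioo T T', u' t ≤ K * u t ^ 2) (hnonneg : ∀ t ∈ Icc T T', 0 ≤ u t) :
    AntitoneOn (fun t => u t / (1 + K * u t * (t - T))) (Icc T T') := by
  have hden : ∀ t ∈ Icc T T', 0 < 1 + K * u t * (t - T) := fun t ht => by
    have := mul_nonneg (mul_nonneg hK (hnonneg t ht)) (sub_nonneg.2 ht.1)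
    linarith
  refine antitoneOn_of_hasDerivWithinAt_nonpos (convex_Icc T T')
    (hu.div (continuousOn_const.add ((continuousOn_const.mul hu).mul
      (continuousOn_id.sub continuousOn_const))) fun t ht => (hden t ht).ne')
    (f' := fun t => (u' t - K * u t ^ 2) / (1 + K * u t * (t - T)) ^ 2) ?_ ?_
  all_goals rw [interior_Icc]
  · intro t ht
    have hD : HasDerivAt (fun s => 1 + K * u s * (s - T)) (K * u' t * (t - T) + K * u t) t := by
      simpa using (((hu' t ht).const_mul K).fun_mul ((hasDerivAt_id t).sub_const T)).const_add 1
    have hQ := (hu' t ht).fun_div hD (hden t (Ioo_subset_Icc_self ht)).ne'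
    exact (hQ.congr_deriv (by ring)).hasDerivWithinAt
  · exact fun t ht => div_nonpos_of_nonpos_of_nonneg (sub_nonpos.2 (hbound t ht)) (sq_nonneg _)

theorem le_div_one_sub_of_deriv_le_mul_sq (hK : 0 ≤ K)
    (hu : ContinuousOn u (Icc T T')) (hu' : ∀ t ∈ Ioo T T', HasDerivAt u (u' t) t)
    (hbound : ∀ t ∈ Ioo T T', u' t ≤ K * u t ^ 2) (hnonneg : ∀ t ∈ Icc T T', 0 ≤ u t)
    {t : ℝ} (ht : t ∈ Icc T T') (hpos : 0 < 1 - K * u T * (t - T)) :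
    u t ≤ u T / (1 - K * u T * (t - T)) := by
  have hT : T ∈ Icc T T' := ⟨le_rfl, ht.1.trans ht.2⟩
  have hmono := antitoneOn_div_one_add_of_deriv_le_mul_sq hK hu hu' hbound hnonneg hT ht ht.1
  have hden : 0 < 1 + K * u t * (t - T) := by
    have := mul_nonneg (mul_nonneg hK (hnonneg t ht)) (sub_nonneg.2 ht.1)
    linarith
  simp only [sub_self, mul_zero, add_zero, div_one] at hmono
  rw [div_le_iff₀ hden] at hmono
  rw [le_div_iff₀ hpos]
  linarith

end Riccati

theorem gel_riccati_gronwall_general (T T' a K : ℝ)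
    (ha : 0 ≤ a) (hK : 0 ≤ K) (hsmall : K * a * (T' - T) < 1)
    (y : ℝ → ℝ) (hcont : ContinuousOn y (Set.Icc T T'))
    (hnonneg : ∀ t ∈ Set.Icc T T', 0 ≤ y t)
    (hineq : ∀ t ∈ Set.Icc T T', y t ≤ a + K * ∫ τ in T..t, (y τ) ^ 2) :
    ∀ t ∈ Set.Icc T T', y t ≤ a / (1 - K * a * (t - T)) := by
  intro t ht
  set u : ℝ → ℝ := fun s => a + K * ∫ τ in T..s, y τ ^ 2 with hu_def
  have hy_le_u : ∀ s ∈ Icc T T', y s ≤ u s := hineq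
  have hcont_u : ContinuousOn u (Icc T T') := by
    have hTT' : T ≤ T' := ht.1.trans ht.2
    have hprim := intervalIntegral.continuousOn_primitive_interval'
      ((hcont.pow 2).intervalIntegrable_of_Icc (μ := MeasureTheory.volume) hTT') left_mem_uIcc
    rw [uIcc_of_le hTT'] at hprim
    exact continuousOn_const.add (continuousOn_const.mul hprim)
  have hderiv_u : ∀ s ∈ Ioo T T', HasDerivAt u (K * y s ^ 2) s := fun s hs =>
    ((hasDerivAt_integral_of_continuousOn (hcont.pow 2) hs).const_mul K).const_add a
  have hbound : ∀ s ∈ Ioo T T', K * y s ^ 2 ≤ K * u s ^ 2 := fun s hs =>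
    have hs' := Ioo_subset_Icc_self hs
    mul_le_mul_of_nonneg_left (pow_le_pow_left₀ (hnonneg s hs') (hy_le_u s hs') 2) hK
  have hpos : 0 < 1 - K * a * (t - T) := by
    have := mul_le_mul_of_nonneg_left (sub_le_sub_right ht.2 T) (mul_nonneg hK ha)
    linarith
  have huT : u T = a := by simp [hu_def]
  calc y t ≤ u t := hy_le_u t ht
    _ ≤ u T / (1 - K * u T * (t - T)) :=
      le_div_one_sub_of_deriv_le_mul_sq hK hcont_u hderiv_u hbound
        (fun s hs => (hnonneg s hs).trans (hy_le_u s hs)) ht (huT ▸ hpos)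
    _ = a / (1 - K * a * (t - T)) := by rw [huT]

/-- Riccati-type nonlinear Gronwall estimate: if y(t) ≤ a + K∫_T^t y(τ)² dτ on
[T,T'] with K·a·(T'−T) < 1, then y(t) ≤ a/(1 − K·a·(t−T)). -/
theorem gel_riccati_gronwall (T T' a K : ℝ) (hTT' : T ≤ T')
    (ha : 0 ≤ a) (hK : 0 ≤ K) (hsmall : K * a * (T' - T) < 1)
    (y : ℝ → ℝ) (hcont : ContinuousOn y (Set.Icc T T'))
    (hnonneg : ∀ t ∈ Set.Icc T T', 0 ≤ y t)
    (hineq : ∀ t ∈ Set.Icc T T', y t ≤ a + K * ∫ τ in T..t, (y τ) ^ 2) :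
    ∀ t ∈ Set.Icc T T', y t ≤ a / (1 - K * a * (t - T)) :=
  gel_riccati_gronwall_general T T' a K ha hK hsmall y hcont hnonneg hineq
end

section
/- Let T ≤ T' be real numbers, let a ≥ 0 and C ≥ 0 be constants with 2·C·a·(T' − T) < 1, and let U₁, U₂ : [T, T'] → ℝ be continuous nonnegative functions satisfying, for i = 1, 2 and all t ∈ [T, T']: U_i(t) ≤ a + C·∫_T^t ( U₁(τ)² + U₂(τ)² ) dτ. Then for i = 1, 2 and all t ∈ [T, T']: U_i(t) ≤ a / (1 − 2·C·a·(t − T)). -/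
/-!
With `G t = a + C ∫_T^t (U₁² + U₂²)`, both `Uᵢ ≤ G`, so `G' = C (U₁² + U₂²) ≤ 2 C G²`.
For `G > 0` this says that `1 / G + 2 C t` is nondecreasing, which integrates to
`G t ≤ a / (1 - 2 C a (t - T))`. Positivity of `G` needs `a > 0`; for `a = 0` one runs the
argument with any `b > a` in place of `a` and lets `b ↓ a`, the bound being continuous in `b`.
-/

open Set Filter Topology

theorem le_div_of_hasDerivAt_le_mul_sq {G G' : ℝ → ℝ} {T t k : ℝ} (hTt : T ≤ t)
    (hcont : ContinuousOn G (Icc T t)) (hpos : ∀ s ∈ Icc T t, 0 < G s)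
    (hderiv : ∀ s ∈ Ioo T t, HasDerivAt G (G' s) s)
    (hriccati : ∀ s ∈ Ioo T t, G' s ≤ k * G s ^ 2)
    (hden : 0 < 1 - k * G T * (t - T)) :
    G t ≤ G T / (1 - k * G T * (t - T)) := by
  have hmono : MonotoneOn (fun s => (G s)⁻¹ + k * s) (Icc T t) := by
    refine monotoneOn_of_hasDerivWithinAt_nonneg (f' := fun s => -G' s / G s ^ 2 + k)
      (convex_Icc T t) ((hcont.inv₀ fun s hs => (hpos s hs).ne').add (by fun_prop))
      (fun s hs => ?_) (fun s hs => ?_) <;> rw [interior_Icc] at hs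
    · have hGs := hpos s (Ioo_subset_Icc_self hs)
      exact (((hderiv s hs).inv hGs.ne').add ((hasDerivAt_id s).const_mul k)).hasDerivWithinAt
        |>.congr_deriv (by simp)
    · have hGs := hpos s (Ioo_subset_Icc_self hs)
      rw [neg_div, le_neg_add_iff_add_le, add_zero, div_le_iff₀ (by positivity)]
      exact hriccati s hs
  have hT := hpos T ⟨le_rfl, hTt⟩
  have ht := hpos t ⟨hTt, le_rfl⟩
  have key : (G T)⁻¹ + k * T ≤ (G t)⁻¹ + k * t := hmono ⟨le_rfl, hTt⟩ ⟨hTt, le_rfl⟩ hTt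
  rw [le_div_iff₀ hden]
  have := mul_le_mul_of_nonneg_left key (mul_pos hT ht).le
  field_simp at this
  nlinarith

section RiccatiIntegral

variable {g : ℝ → ℝ} {T t C k : ℝ}

theorem mul_integral_nonneg_of_nonneg_on {s : ℝ} (hC : 0 ≤ C)
    (hnonneg : ∀ u ∈ Icc T t, 0 ≤ g u) (hs : s ∈ Icc T t) : 0 ≤ C * ∫ τ in T..s, g τ :=
  mul_nonneg hC <| intervalIntegral.integral_nonneg hs.1 fun u hu =>
    hnonneg u ⟨hu.1, hu.2.trans hs.2⟩

theorem riccati_integral_bound_of_pos {b : ℝ} (hTt : T ≤ t) (hb : 0 < b) (hC : 0 ≤ C)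
    (hcont : ContinuousOn g (Icc T t)) (hnonneg : ∀ s ∈ Icc T t, 0 ≤ g s)
    (hle : ∀ s ∈ Icc T t, g s ≤ k * (b + C * ∫ τ in T..s, g τ) ^ 2)
    (hden : 0 < 1 - k * C * b * (t - T)) :
    b + C * ∫ τ in T..t, g τ ≤ b / (1 - k * C * b * (t - T)) := by
  set G : ℝ → ℝ := fun s => b + C * ∫ τ in T..s, g τ
  have hGT : G T = b := by simp [G]
  have hcontG : ContinuousOn G (Icc T t) := by
    have := intervalIntegral.continuousOn_primitive_interval (μ := MeasureTheory.volume)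
      (uIcc_of_le hTt ▸ hcont.integrableOn_Icc)
    exact continuousOn_const.add (continuousOn_const.mul (uIcc_of_le hTt ▸ this))
  have hderiv : ∀ s ∈ Ioo T t, HasDerivAt G (C * g s) s := by
    intro s hs
    have hnhds : Icc T t ∈ 𝓝 s := Icc_mem_nhds hs.1 hs.2
    have hint : IntervalIntegrable g MeasureTheory.volume T s :=
      (hcont.mono (uIcc_of_le hs.1.le ▸ Icc_subset_Icc_right hs.2.le)).intervalIntegrable
    exact ((intervalIntegral.integral_hasDerivAt_right hint
      (hcont.stronglyMeasurableAtFilter_nhdsWithin measurableSet_Icc s |>.filter_mono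
        (nhdsWithin_eq_nhds.2 hnhds).ge) (hcont.continuousAt hnhds)).const_mul C).const_add b
  have hpos : ∀ s ∈ Icc T t, 0 < G s := fun s hs =>
    add_pos_of_pos_of_nonneg hb (mul_integral_nonneg_of_nonneg_on hC hnonneg hs)
  have := le_div_of_hasDerivAt_le_mul_sq (k := k * C) hTt hcontG hpos hderiv
    (fun s hs => ?_) (by rwa [hGT])
  · rwa [hGT] at this
  · calc C * g s ≤ C * (k * G s ^ 2) :=
          mul_le_mul_of_nonneg_left (hle s (Ioo_subset_Icc_self hs)) hC
      _ = k * C * G s ^ 2 := by ring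

theorem riccati_integral_bound {a : ℝ} (hTt : T ≤ t) (ha : 0 ≤ a) (hC : 0 ≤ C) (hk : 0 ≤ k)
    (hcont : ContinuousOn g (Icc T t)) (hnonneg : ∀ s ∈ Icc T t, 0 ≤ g s)
    (hle : ∀ s ∈ Icc T t, g s ≤ k * (a + C * ∫ τ in T..s, g τ) ^ 2)
    (hden : 0 < 1 - k * C * a * (t - T)) :
    a + C * ∫ τ in T..t, g τ ≤ a / (1 - k * C * a * (t - T)) := by
  have hden_cont : Continuous fun b : ℝ => 1 - k * C * b * (t - T) := by fun_prop
  refine le_of_tendsto_of_tendsto (b := 𝓝[>] a)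
    ((continuous_add_const _).tendsto a |>.mono_left nhdsWithin_le_nhds)
    (((continuous_id.tendsto a).div (hden_cont.tendsto a) hden.ne').mono_left
      nhdsWithin_le_nhds) ?_
  filter_upwards [self_mem_nhdsWithin,
    nhdsWithin_le_nhds (hden_cont.isOpen_preimage _ isOpen_Ioi |>.mem_nhds hden)]
    with b (hab : a < b) (hbden : 0 < 1 - k * C * b * (t - T))
  refine riccati_integral_bound_of_pos hTt (ha.trans_lt hab) hC hcont hnonneg
    (fun s hs => ?_) hbden
  have hI := mul_integral_nonneg_of_nonneg_on hC hnonneg hs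
  exact (hle s hs).trans
    (mul_le_mul_of_nonneg_left (pow_le_pow_left₀ (by linarith) (by linarith) 2) hk)

end RiccatiIntegral

theorem gel_riccati_gronwall_two_component_general (T T' a C : ℝ)
    (ha : 0 ≤ a) (hC : 0 ≤ C) (hsmall : 2 * C * a * (T' - T) < 1)
    (U₁ U₂ : ℝ → ℝ)
    (hcont₁ : ContinuousOn U₁ (Set.Icc T T')) (hcont₂ : ContinuousOn U₂ (Set.Icc T T'))
    (hnonneg₁ : ∀ t ∈ Set.Icc T T', 0 ≤ U₁ t) (hnonneg₂ : ∀ t ∈ Set.Icc T T', 0 ≤ U₂ t)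
    (hineq₁ : ∀ t ∈ Set.Icc T T',
      U₁ t ≤ a + C * ∫ τ in T..t, ((U₁ τ) ^ 2 + (U₂ τ) ^ 2))
    (hineq₂ : ∀ t ∈ Set.Icc T T',
      U₂ t ≤ a + C * ∫ τ in T..t, ((U₁ τ) ^ 2 + (U₂ τ) ^ 2)) :
    (∀ t ∈ Set.Icc T T', U₁ t ≤ a / (1 - 2 * C * a * (t - T))) ∧
      (∀ t ∈ Set.Icc T T', U₂ t ≤ a / (1 - 2 * C * a * (t - T))) := by
  have hsq : ∀ s ∈ Icc T T', U₁ s ^ 2 + U₂ s ^ 2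
      ≤ 2 * (a + C * ∫ τ in T..s, (U₁ τ ^ 2 + U₂ τ ^ 2)) ^ 2 := fun s hs => by
    linarith [pow_le_pow_left₀ (hnonneg₁ s hs) (hineq₁ s hs) 2,
      pow_le_pow_left₀ (hnonneg₂ s hs) (hineq₂ s hs) 2]
  have hbound : ∀ t ∈ Icc T T', a + C * ∫ τ in T..t, (U₁ τ ^ 2 + U₂ τ ^ 2)
      ≤ a / (1 - 2 * C * a * (t - T)) := fun t ht => by
    have hsub : Icc T t ⊆ Icc T T' := Icc_subset_Icc_right ht.2
    refine riccati_integral_bound ht.1 ha hC zero_le_two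
      (((hcont₁.pow 2).add (hcont₂.pow 2)).mono hsub) (fun s _ => by positivity)
      (fun s hs => hsq s (hsub hs)) ?_
    nlinarith [mul_nonneg (mul_nonneg hC ha) (sub_nonneg.2 ht.2)]
  exact ⟨fun t ht => (hineq₁ t ht).trans (hbound t ht),
    fun t ht => (hineq₂ t ht).trans (hbound t ht)⟩

/-- Two-component Riccati-type Gronwall estimate: if U₁, U₂ satisfy the coupled
quadratic integral inequality Uᵢ(t) ≤ a + C∫_T^t (U₁² + U₂²) dτ on [T,T'] with
2·C·a·(T'−T) < 1, then Uᵢ(t) ≤ a/(1 − 2·C·a·(t−T)). -/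
theorem gel_riccati_gronwall_two_component (T T' a C : ℝ) (hTT' : T ≤ T')
    (ha : 0 ≤ a) (hC : 0 ≤ C) (hsmall : 2 * C * a * (T' - T) < 1)
    (U₁ U₂ : ℝ → ℝ)
    (hcont₁ : ContinuousOn U₁ (Set.Icc T T')) (hcont₂ : ContinuousOn U₂ (Set.Icc T T'))
    (hnonneg₁ : ∀ t ∈ Set.Icc T T', 0 ≤ U₁ t) (hnonneg₂ : ∀ t ∈ Set.Icc T T', 0 ≤ U₂ t)
    (hineq₁ : ∀ t ∈ Set.Icc T T',
      U₁ t ≤ a + C * ∫ τ in T..t, ((U₁ τ) ^ 2 + (U₂ τ) ^ 2))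
    (hineq₂ : ∀ t ∈ Set.Icc T T',
      U₂ t ≤ a + C * ∫ τ in T..t, ((U₁ τ) ^ 2 + (U₂ τ) ^ 2)) :
    (∀ t ∈ Set.Icc T T', U₁ t ≤ a / (1 - 2 * C * a * (t - T))) ∧
      (∀ t ∈ Set.Icc T T', U₂ t ≤ a / (1 - 2 * C * a * (t - T))) :=
  gel_riccati_gronwall_two_component_general T T' a C ha hC hsmall U₁ U₂ hcont₁ hcont₂ hnonneg₁
    hnonneg₂ hineq₁ hineq₂
end
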